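/- Let (𝒜, φ) be a non-commutative probability space and, for each N ≥ 1, let a_1, …, a_N and b_1, …, b_N be elements of 𝒜 with φ(a_i) = φ(b_i) = 0, φ(a_i²) = φ(b_i²) = 1, and uniformly bounded moments of all orders. Suppose a_1, …, a_N are BMT independent with respect to a digraph G_N = ([N], E(G_N)) and b_1, …, b_N are BMT independent with respect to a digraph H_N = ([N], E(H_N)). If the symmetric difference of the edge sets satisfies |E(G_N) Δ E(H_N)| / N² → 0 as N → ∞, then for every integer m ≥ 1, lim_{N→∞} [ φ(((a_1 + ⋯ + a_N)/√N)^m) − φ(((b_1 + ⋯ + b_N)/√N)^m) ] = 0. -/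

import Mathlib

open scoped Classical
open Filter

noncomputable section

/-- The relation defining the kernel of `f` restricted to the index set `S`,
subordinated to the digraph with edge relation `E`: `k ∼ k'` iff `f k = f k'` and
every `l ∈ S` strictly between `k` and `k'` with `f l ≠ f k` satisfies `(f l, f k) ∈ E`. -/
def kerGRelOn {m : ℕ} {V : Type*} (E : V → V → Prop) (f : Fin m → V)
    (S : Finset (Fin m)) (k k' : Fin m) : Prop :=
  f k = f k' ∧ ∀ l ∈ S, min k k' < l → l < max k k' → f l ≠ f k → E (f l) (f k)

/-- The blocks of the kernel of `f|_S` subordinated to the digraph `E`. -/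
def kerGBlocks {m : ℕ} {V : Type*} (E : V → V → Prop) (f : Fin m → V)
    (S : Finset (Fin m)) : Finset (Finset (Fin m)) :=
  S.image fun k => S.filter fun k' => kerGRelOn E f S k k'

/-- The blocks of the plain kernel `ker[f]` of `f : [m] → V`. -/
def kerBlocks {m : ℕ} {V : Type*} (f : Fin m → V) : Finset (Finset (Fin m)) :=
  Finset.univ.image fun k => Finset.univ.filter fun k' => f k = f k'

/-- The product of `a k` for `k ∈ B`, taken in increasing order of `k`. -/
def blockProd {A : Type*} [Monoid A] {m : ℕ} (a : Fin m → A) (B : Finset (Fin m)) : A :=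
  ((B.sort (· ≤ ·)).map a).prod

/-- The edge set of the nesting-crossing graph of the partition `π`, relabeled along `f`:
the pair `(f-label of B, f-label of C)` is an edge whenever `B ≠ C` are blocks of `π` and
some `l ∈ B` lies strictly between two elements (equivalently, between min and max) of `C`. -/
def nestCrossEdges {m : ℕ} {V : Type*} (π : Finset (Finset (Fin m))) (f : Fin m → V) :
    Set (V × V) :=
  { p | ∃ B ∈ π, ∃ C ∈ π, B ≠ C ∧
      (∃ l ∈ B, ∃ c₁ ∈ C, ∃ c₂ ∈ C, c₁ < l ∧ l < c₂) ∧
      (∃ k ∈ B, f k = p.1) ∧ (∃ k' ∈ C, f k' = p.2) }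

/-- A family of (non-unital) subalgebras of a non-commutative probability space `(𝒜, φ)`
is BMT independent with respect to the digraph `E` on the index set `I`. -/
def BMTIndep {𝒜 : Type*} [Ring 𝒜] [Algebra ℂ 𝒜] (φ : 𝒜 →ₗ[ℂ] ℂ)
    {I : Type*} (E : I → I → Prop) (A : I → NonUnitalSubalgebra ℂ 𝒜) : Prop :=
  ∀ (m : ℕ), 1 ≤ m → ∀ (idx : Fin m → I) (a : Fin m → 𝒜),
    (∀ k, a k ∈ A (idx k)) →
    φ (List.ofFn a).prod = ∏ B ∈ kerGBlocks E idx Finset.univ, φ (blockProd a B)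

/-- Random variables `a 0, …, a (N-1)` are BMT independent with respect to the digraph `E`. -/
def BMTIndepVars {𝒜 : Type*} [Ring 𝒜] [Algebra ℂ 𝒜] (φ : 𝒜 →ₗ[ℂ] ℂ)
    {N : ℕ} (E : Fin N → Fin N → Prop) (a : Fin N → 𝒜) : Prop :=
  ∀ (m : ℕ) (idx : Fin m → Fin N),
    φ (List.ofFn fun k => a (idx k)).prod
      = ∏ B ∈ kerGBlocks E idx Finset.univ, φ (blockProd (fun k => a (idx k)) B)


/-! Expanding the `m`-th power and applying BMT independence writes `φ((∑ aᵢ)^m)` as a sum, over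
index maps `idx : [m] → [N]`, of products of moments over the blocks of `ker_G[idx]`. Maps with a
singleton block contribute `0`, and the others take at most `m/2` distinct values. Those with fewer
than `m/2` values number `O(N^((m-1)/2))` and contribute uniformly bounded amounts, so they vanish
after dividing by `N^(m/2)`. Those with exactly `m/2` values have all blocks of size `2` and
contribute exactly `1`, so only their number depends on the graph; a map counted for `G` but not
for `H` takes two distinct values joined by an edge of `G Δ H`, and there are at most
`|E(G) Δ E(H)| · O(N^(m/2 - 2))` such maps. -/

open Finset

lemma between_or_between_of_between {α : Type*} [LinearOrder α] {k k' k'' l : α}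
    (h₁ : min k k'' < l) (h₂ : l < max k k'') (hne : l ≠ k') :
    (min k k' < l ∧ l < max k k') ∨ (min k' k'' < l ∧ l < max k' k'') := by
  simp only [min_lt_iff, lt_max_iff] at *
  rcases lt_or_gt_of_ne hne with h | h <;> tauto

section kernel

variable {m : ℕ} {V : Type*} {E : V → V → Prop} {f : Fin m → V} {S : Finset (Fin m)}

lemma kerGRelOn_refl (k : Fin m) : kerGRelOn E f S k k :=
  ⟨rfl, fun _ _ h₁ h₂ => absurd (h₁.trans h₂) (by simp)⟩

lemma kerGRelOn_symm {k k' : Fin m} (h : kerGRelOn E f S k k') : kerGRelOn E f S k' k := by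
  refine ⟨h.1.symm, fun l hl h₁ h₂ hne => ?_⟩
  rw [min_comm] at h₁
  rw [max_comm] at h₂
  rw [← h.1] at hne ⊢
  exact h.2 l hl h₁ h₂ hne

lemma kerGRelOn_trans {k k' k'' : Fin m} (h : kerGRelOn E f S k k')
    (h' : kerGRelOn E f S k' k'') : kerGRelOn E f S k k'' := by
  refine ⟨h.1.trans h'.1, fun l hl h₁ h₂ hne => ?_⟩
  have hlk' : l ≠ k' := fun hl' => hne (hl' ▸ h.1.symm)
  rcases between_or_between_of_between h₁ h₂ hlk' with ⟨h₁, h₂⟩ | ⟨h₁, h₂⟩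
  · exact h.2 l hl h₁ h₂ hne
  · rw [h.1] at hne ⊢
    exact h'.2 l hl h₁ h₂ hne

variable (E f) in
def kerGSetoid : Setoid (Fin m) where
  r := kerGRelOn E f univ
  iseqv := ⟨kerGRelOn_refl, kerGRelOn_symm, kerGRelOn_trans⟩

variable (E f) in
def kerGPartition : Finpartition (univ : Finset (Fin m)) :=
  Finpartition.ofSetoid (kerGSetoid E f)

lemma kerGPartition_parts : (kerGPartition E f).parts = kerGBlocks E f univ := rfl

lemma mem_kerGPartition_part {k k' : Fin m} :
    k' ∈ (kerGPartition E f).part k ↔ kerGRelOn E f univ k k' :=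
  Finpartition.mem_part_ofSetoid_iff_rel

lemma sum_card_kerGBlocks : ∑ B ∈ kerGBlocks E f univ, #B = m := by
  simpa [kerGPartition_parts] using (kerGPartition E f).sum_card_parts

lemma card_kerGBlocks_le : #(kerGBlocks E f univ) ≤ m := by
  simpa [kerGPartition_parts] using (kerGPartition E f).card_parts_le_card

lemma nonempty_of_mem_kerGBlocks {B : Finset (Fin m)} (hB : B ∈ kerGBlocks E f univ) :
    B.Nonempty :=
  (kerGPartition E f).nonempty_of_mem_parts hB

lemma apply_eq_of_mem_kerGBlocks {B : Finset (Fin m)} (hB : B ∈ kerGBlocks E f univ)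
    {k k' : Fin m} (hk : k ∈ B) (hk' : k' ∈ B) : f k = f k' := by
  rw [← (kerGPartition E f).part_eq_of_mem hB hk, mem_kerGPartition_part] at hk'
  exact hk'.1

lemma card_image_le_card_kerGBlocks [DecidableEq V] : #(univ.image f) ≤ #(kerGBlocks E f univ) := by
  have hcover : univ.image f ⊆ (kerGBlocks E f univ).biUnion (·.image f) := by
    intro v hv
    obtain ⟨k, -, rfl⟩ := mem_image.mp hv
    exact mem_biUnion.mpr ⟨_, (kerGPartition E f).part_mem.2 (mem_univ k),
      mem_image_of_mem f ((kerGPartition E f).mem_part (mem_univ k))⟩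
  calc #(univ.image f) ≤ ∑ B ∈ kerGBlocks E f univ, #(B.image f) :=
        (card_le_card hcover).trans card_biUnion_le
    _ ≤ ∑ B ∈ kerGBlocks E f univ, 1 := sum_le_sum fun B hB => card_le_one.mpr <| by
        simp only [mem_image]
        rintro _ ⟨k, hk, rfl⟩ _ ⟨k', hk', rfl⟩
        exact apply_eq_of_mem_kerGBlocks hB hk hk'
    _ = #(kerGBlocks E f univ) := card_eq_sum_ones _ |>.symm

lemma two_mul_card_kerGBlocks_le (h₂ : ∀ B ∈ kerGBlocks E f univ, 2 ≤ #B) :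
    2 * #(kerGBlocks E f univ) ≤ m := by
  calc 2 * #(kerGBlocks E f univ) = ∑ B ∈ kerGBlocks E f univ, 2 := by
        rw [sum_const, smul_eq_mul, mul_comm]
    _ ≤ ∑ B ∈ kerGBlocks E f univ, #B := sum_le_sum h₂
    _ = m := sum_card_kerGBlocks

lemma two_mul_card_image_le [DecidableEq V] (h₂ : ∀ B ∈ kerGBlocks E f univ, 2 ≤ #B) :
    2 * #(univ.image f) ≤ m :=
  (Nat.mul_le_mul_left 2 card_image_le_card_kerGBlocks).trans (two_mul_card_kerGBlocks_le h₂)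

lemma card_eq_two_of_two_mul_card_image_eq [DecidableEq V] (h₂ : ∀ B ∈ kerGBlocks E f univ, 2 ≤ #B)
    (hr : 2 * #(univ.image f) = m) : ∀ B ∈ kerGBlocks E f univ, #B = 2 := by
  have hle : ∑ B ∈ kerGBlocks E f univ, #B ≤ ∑ B ∈ kerGBlocks E f univ, 2 :=
    calc ∑ B ∈ kerGBlocks E f univ, #B = 2 * #(univ.image f) := sum_card_kerGBlocks.trans hr.symm
      _ ≤ 2 * #(kerGBlocks E f univ) := Nat.mul_le_mul_left 2 card_image_le_card_kerGBlocks
      _ = ∑ B ∈ kerGBlocks E f univ, 2 := by rw [sum_const, smul_eq_mul, mul_comm]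
  exact fun B hB => (((sum_eq_sum_iff_of_le h₂).mp (le_antisymm (sum_le_sum h₂) hle)) B hB).symm

lemma exists_edge_of_kerGRelOn_of_not_kerGRelOn {EG EH : V → V → Prop} {S : Finset (Fin m)}
    {k k' : Fin m} (hG : kerGRelOn EG f S k k') (hH : ¬ kerGRelOn EH f S k k') :
    ∃ l, f l ≠ f k ∧ EG (f l) (f k) ∧ ¬ EH (f l) (f k) := by
  simp only [kerGRelOn, not_and, not_forall] at hH
  obtain ⟨l, hl, h₁, h₂, hne, hEH⟩ := hH hG.1
  exact ⟨l, hne, hG.2 l hl h₁ h₂ hne, hEH⟩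

lemma exists_edge_of_two_le_card_kerGBlocks {EG EH : V → V → Prop}
    (hG : ∀ B ∈ kerGBlocks EG f univ, 2 ≤ #B) (hH : ¬ ∀ B ∈ kerGBlocks EH f univ, 2 ≤ #B) :
    ∃ l k, f l ≠ f k ∧ EG (f l) (f k) ∧ ¬ EH (f l) (f k) := by
  obtain ⟨B, hB, hcard⟩ : ∃ B ∈ kerGBlocks EH f univ, #B < 2 := by simpa using hH
  obtain ⟨k, hk⟩ := nonempty_of_mem_kerGBlocks hB
  obtain ⟨k', hk', hne⟩ := exists_mem_ne
    (hG _ ((kerGPartition EG f).part_mem.2 (mem_univ k))) k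
  have hnot : ¬ kerGRelOn EH f univ k k' := by
    rw [← mem_kerGPartition_part, (kerGPartition EH f).part_eq_of_mem hB hk]
    exact fun hk'B => hne (card_le_one.mp (by omega) k' hk'B k hk)
  obtain ⟨l, hl⟩ := exists_edge_of_kerGRelOn_of_not_kerGRelOn (mem_kerGPartition_part.mp hk') hnot
  exact ⟨l, k, hl⟩

end kernel

section counting
variable {α ι : Type*} [Fintype α] [DecidableEq α] [Fintype ι] [DecidableEq ι]

lemma card_finsets_card_le_le (hα : 1 ≤ Fintype.card α) (s : ℕ) :
    #{T : Finset α | #T ≤ s} ≤ (s + 1) * Fintype.card α ^ s := by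
  have hcover : ({T | #T ≤ s} : Finset (Finset α)) ⊆
      (range (s + 1)).biUnion (powersetCard · univ) := by
    intro T hT
    exact mem_biUnion.mpr ⟨#T, mem_range.mpr (Nat.lt_succ_of_le (mem_filter.mp hT).2),
      mem_powersetCard.mpr ⟨subset_univ T, rfl⟩⟩
  calc #{T : Finset α | #T ≤ s}
      ≤ ∑ t ∈ range (s + 1), #(powersetCard t (univ : Finset α)) :=
        (card_le_card hcover).trans card_biUnion_le
    _ ≤ ∑ t ∈ range (s + 1), Fintype.card α ^ s := sum_le_sum fun t ht => by
        rw [card_powersetCard, card_univ]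
        exact (Nat.choose_le_pow _ _).trans
          (Nat.pow_le_pow_right hα (Nat.lt_succ_iff.mp (mem_range.mp ht)))
    _ = (s + 1) * Fintype.card α ^ s := by rw [sum_const, card_range, smul_eq_mul]

/-- Stated with `card α ^ #U` on the left to avoid the truncated exponent `s - #U`. -/
lemma card_finsets_card_le_superset_mul_pow_le (hα : 1 ≤ Fintype.card α) (U : Finset α)
    (s : ℕ) :
    #{T : Finset α | #T ≤ s ∧ U ⊆ T} * Fintype.card α ^ #U ≤ (s + 1) * Fintype.card α ^ s := by
  set 𝒯 : Finset (Finset α) := {T | #T ≤ s ∧ U ⊆ T}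
  have mem_𝒯 {T : Finset α} : T ∈ 𝒯 ↔ #T ≤ s ∧ U ⊆ T := by simp [𝒯]
  rcases lt_or_ge s #U with hs | hs
  · have hempty : 𝒯 = ∅ := eq_empty_of_forall_notMem fun T hT =>
      (card_le_card (mem_𝒯.mp hT).2).not_gt ((mem_𝒯.mp hT).1.trans_lt hs)
    simp [hempty]
  have hinj : Set.InjOn (· \ U) 𝒯 := by
    intro T₁ h₁ T₂ h₂ h
    rw [← sdiff_union_of_subset (mem_𝒯.mp h₁).2, ← sdiff_union_of_subset (mem_𝒯.mp h₂).2]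
    exact congrArg (· ∪ U) h
  have hmaps : Set.MapsTo (· \ U) 𝒯 ({S | #S ≤ s - #U} : Finset (Finset α)) := by
    intro T hT
    have hT := mem_𝒯.mp hT
    simp only [coe_filter, mem_univ, true_and, Set.mem_ofPred_eq]
    rw [card_sdiff_of_subset hT.2]
    omega
  calc #𝒯 * Fintype.card α ^ #U
      ≤ (s - #U + 1) * Fintype.card α ^ (s - #U) * Fintype.card α ^ #U :=
        Nat.mul_le_mul_right _
          ((card_le_card_of_injOn _ hmaps hinj).trans (card_finsets_card_le_le hα _))
    _ ≤ (s + 1) * Fintype.card α ^ s := by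
        rw [mul_assoc, ← pow_add, Nat.sub_add_cancel hs]
        exact Nat.mul_le_mul_right _ (by omega)

lemma card_maps_card_image_le_mul_pow_le (hα : 1 ≤ Fintype.card α) (U : Finset α) (s : ℕ) :
    #{g : ι → α | #(univ.image g) ≤ s ∧ U ⊆ univ.image g} * Fintype.card α ^ #U
      ≤ (s + 1) * Fintype.card α ^ s * s ^ Fintype.card ι := by
  set 𝒯 : Finset (Finset α) := {T | #T ≤ s ∧ U ⊆ T}
  set 𝒢 : Finset (ι → α) := {g | #(univ.image g) ≤ s ∧ U ⊆ univ.image g}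
  have hcover : 𝒢 ⊆ 𝒯.biUnion fun T => Fintype.piFinset fun _ : ι => T := by
    intro g hg
    exact mem_biUnion.mpr ⟨univ.image g, by simpa [𝒯, 𝒢] using hg,
      Fintype.mem_piFinset.mpr fun i => mem_image_of_mem g (mem_univ i)⟩
  have hcard : #𝒢 ≤ #𝒯 * s ^ Fintype.card ι :=
    calc #𝒢 ≤ ∑ T ∈ 𝒯, #(Fintype.piFinset fun _ : ι => T) :=
          (card_le_card hcover).trans card_biUnion_le
      _ ≤ ∑ T ∈ 𝒯, s ^ Fintype.card ι := sum_le_sum fun T hT => by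
          rw [Fintype.card_piFinset, prod_const, card_univ]
          exact Nat.pow_le_pow_left (mem_filter.mp hT).2.1 _
      _ = #𝒯 * s ^ Fintype.card ι := by rw [sum_const, smul_eq_mul]
  calc #𝒢 * Fintype.card α ^ #U ≤ #𝒯 * Fintype.card α ^ #U * s ^ Fintype.card ι := by
        rw [mul_right_comm]
        exact Nat.mul_le_mul_right _ hcard
    _ ≤ _ := Nat.mul_le_mul_right _ (card_finsets_card_le_superset_mul_pow_le hα U s)

end counting

lemma blockProd_eq_pow_of_forall_eq {A : Type*} [Monoid A] {m : ℕ} {a : Fin m → A}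
    {B : Finset (Fin m)} {y : A} (h : ∀ k ∈ B, a k = y) : blockProd a B = y ^ #B := by
  have hrep : (B.sort (· ≤ ·)).map a = List.replicate #B y :=
    List.eq_replicate_iff.mpr ⟨by simp, by simpa using h⟩
  rw [blockProd, hrep, List.prod_replicate]

lemma sum_pow_eq_sum_prod_ofFn {A ι : Type*} [Semiring A] [Fintype ι] (x : ι → A) (m : ℕ) :
    (∑ i, x i) ^ m = ∑ idx : Fin m → ι, (List.ofFn fun k => x (idx k)).prod := by
  induction m with
  | zero => simp
  | succ m ih =>
    rw [pow_succ', ih, sum_mul_sum, ← Fintype.sum_prod_type',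
      ← (Fin.consEquiv fun _ => ι).sum_comp]
    simp [List.ofFn_succ, Fin.consEquiv]

lemma blockProd_of_mem_kerGBlocks {A V : Type*} [Monoid A] {m : ℕ} {E : V → V → Prop}
    {x : V → A} {idx : Fin m → V} {B : Finset (Fin m)} (hB : B ∈ kerGBlocks E idx univ)
    {k : Fin m} (hk : k ∈ B) : blockProd (fun k => x (idx k)) B = x (idx k) ^ #B :=
  blockProd_eq_pow_of_forall_eq fun _ hk' => by rw [apply_eq_of_mem_kerGBlocks hB hk' hk]

section moments
variable {𝒜 : Type*} [Ring 𝒜] [Algebra ℂ 𝒜] (φ : 𝒜 →ₗ[ℂ] ℂ) {N m : ℕ}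
  (E : Fin N → Fin N → Prop) (x : Fin N → 𝒜)

def kerGProd (idx : Fin m → Fin N) : ℂ :=
  ∏ B ∈ kerGBlocks E idx univ, φ (blockProd (fun k => x (idx k)) B)

def goodSet (m : ℕ) : Finset (Fin m → Fin N) :=
  {idx | (∀ B ∈ kerGBlocks E idx univ, 2 ≤ #B) ∧ 2 * #(univ.image idx) = m}

def badSet (m : ℕ) : Finset (Fin m → Fin N) :=
  {idx | (∀ B ∈ kerGBlocks E idx univ, 2 ≤ #B) ∧ 2 * #(univ.image idx) ≠ m}

variable {φ E x}

lemma moment_eq_sum_kerGProd (hx : BMTIndepVars φ E x) (m : ℕ) :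
    φ ((∑ i, x i) ^ m) = ∑ idx : Fin m → Fin N, kerGProd φ E x idx := by
  rw [sum_pow_eq_sum_prod_ofFn, map_sum]
  exact sum_congr rfl fun idx _ => hx m idx

lemma kerGProd_eq_zero (hmean : ∀ i, φ (x i) = 0) {idx : Fin m → Fin N}
    (h : ¬ ∀ B ∈ kerGBlocks E idx univ, 2 ≤ #B) : kerGProd φ E x idx = 0 := by
  obtain ⟨B, hB, hcard⟩ : ∃ B ∈ kerGBlocks E idx univ, #B < 2 := by simpa using h
  obtain ⟨k, hk⟩ := nonempty_of_mem_kerGBlocks hB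
  have hsingle : #B = 1 := le_antisymm (by omega) (card_pos.mpr ⟨k, hk⟩)
  exact prod_eq_zero hB (by rw [blockProd_of_mem_kerGBlocks hB hk, hsingle, pow_one, hmean])

lemma kerGProd_eq_one (hvar : ∀ i, φ (x i * x i) = 1) {idx : Fin m → Fin N}
    (h : ∀ B ∈ kerGBlocks E idx univ, #B = 2) : kerGProd φ E x idx = 1 :=
  prod_eq_one fun B hB => by
    obtain ⟨k, hk⟩ := nonempty_of_mem_kerGBlocks hB
    rw [blockProd_of_mem_kerGBlocks hB hk, h B hB, pow_two, hvar]

lemma norm_kerGProd_le {D : ℝ} (hD : 1 ≤ D) (hmom : ∀ i, ∀ n ≤ m, ‖φ (x i ^ n)‖ ≤ D)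
    (idx : Fin m → Fin N) : ‖kerGProd φ E x idx‖ ≤ D ^ m := by
  rw [kerGProd, norm_prod]
  calc ∏ B ∈ kerGBlocks E idx univ, ‖φ (blockProd (fun k => x (idx k)) B)‖
      ≤ ∏ _B ∈ kerGBlocks E idx univ, D := prod_le_prod (fun _ _ => norm_nonneg _) fun B hB => by
        obtain ⟨k, hk⟩ := nonempty_of_mem_kerGBlocks hB
        rw [blockProd_of_mem_kerGBlocks hB hk]
        exact hmom _ _ ((single_le_sum (f := fun B => #B) (fun _ _ => Nat.zero_le _) hB).trans
          sum_card_kerGBlocks.le)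
    _ = D ^ #(kerGBlocks E idx univ) := prod_const D
    _ ≤ D ^ m := pow_le_pow_right₀ hD card_kerGBlocks_le

lemma moment_eq_card_goodSet_add_sum_badSet (hx : BMTIndepVars φ E x)
    (hmean : ∀ i, φ (x i) = 0) (hvar : ∀ i, φ (x i * x i) = 1) (m : ℕ) :
    φ ((∑ i, x i) ^ m) = #(goodSet E m) + ∑ idx ∈ badSet E m, kerGProd φ E x idx := by
  rw [moment_eq_sum_kerGProd hx, ← sum_filter_of_ne fun idx _ h => not_not.mp
    (mt (kerGProd_eq_zero hmean) h), ← sum_filter_add_sum_filter_not _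
    (fun idx => 2 * #(univ.image idx) = m), filter_filter, filter_filter]
  congr 1
  rw [card_eq_sum_ones, Nat.cast_sum, Nat.cast_one]
  exact sum_congr rfl fun idx hidx => by
    obtain ⟨h₂, hr⟩ := (mem_filter.mp hidx).2
    exact kerGProd_eq_one hvar (card_eq_two_of_two_mul_card_image_eq h₂ hr)

end moments

section indexCounting
variable {N m : ℕ}

lemma card_badSet_le (hN : 1 ≤ N) (E : Fin N → Fin N → Prop) :
    #(badSet E m) ≤ ((m - 1) / 2 + 1) * N ^ ((m - 1) / 2) * ((m - 1) / 2) ^ m := by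
  have hsub : badSet E m ⊆
      ({idx | #(univ.image idx) ≤ (m - 1) / 2 ∧ ∅ ⊆ univ.image idx} : Finset (Fin m → Fin N)) := by
    intro idx hidx
    obtain ⟨h₂, hr⟩ := (mem_filter.mp hidx).2
    have := two_mul_card_image_le h₂
    simp only [mem_filter, mem_univ, true_and, empty_subset, and_true]
    omega
  have hcount := card_maps_card_image_le_mul_pow_le (α := Fin N) (ι := Fin m)
    (by simpa using hN) ∅ ((m - 1) / 2)
  rw [card_empty, pow_zero, mul_one, Fintype.card_fin, Fintype.card_fin] at hcount
  exact (card_le_card hsub).trans hcount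

lemma card_goodSet_sdiff_mul_le (hN : 1 ≤ N) {EG EH : Fin N → Fin N → Prop}
    (Δ : Finset (Fin N × Fin N)) (hΔ : ∀ u v, EG u v → ¬ EH u v → (u, v) ∈ Δ) :
    #(goodSet EG m \ goodSet EH m) * N ^ 2 ≤ #Δ * ((m / 2 + 1) * N ^ (m / 2) * (m / 2) ^ m) := by
  set 𝒢 : Fin N × Fin N → Finset (Fin m → Fin N) := fun p =>
    {idx | #(univ.image idx) ≤ m / 2 ∧ {p.1, p.2} ⊆ univ.image idx}
  have hcover : goodSet EG m \ goodSet EH m ⊆ {p ∈ Δ | p.1 ≠ p.2}.biUnion 𝒢 := by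
    intro idx hidx
    obtain ⟨hG, hH⟩ := mem_sdiff.mp hidx
    obtain ⟨hG₂, hr⟩ := (mem_filter.mp hG).2
    have hH₂ : ¬ ∀ B ∈ kerGBlocks EH idx univ, 2 ≤ #B := fun h =>
      hH (mem_filter.mpr ⟨mem_univ _, h, hr⟩)
    obtain ⟨l, k, hne, hEG, hEH⟩ := exists_edge_of_two_le_card_kerGBlocks hG₂ hH₂
    refine mem_biUnion.mpr ⟨(idx l, idx k), mem_filter.mpr ⟨hΔ _ _ hEG hEH, hne⟩, ?_⟩
    simp only [𝒢, mem_filter, mem_univ, true_and, insert_subset_iff, singleton_subset_iff]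
    exact ⟨by omega, mem_image_of_mem idx (mem_univ l), mem_image_of_mem idx (mem_univ k)⟩
  have h𝒢 : ∀ p ∈ {p ∈ Δ | p.1 ≠ p.2}, #(𝒢 p) * N ^ 2 ≤ (m / 2 + 1) * N ^ (m / 2) * (m / 2) ^ m :=
    fun p hp => by
      have hcount := card_maps_card_image_le_mul_pow_le (α := Fin N) (ι := Fin m)
        (by simpa using hN) {p.1, p.2} (m / 2)
      rwa [card_pair (mem_filter.mp hp).2, Fintype.card_fin, Fintype.card_fin] at hcount
  calc #(goodSet EG m \ goodSet EH m) * N ^ 2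
      ≤ (∑ p ∈ {p ∈ Δ | p.1 ≠ p.2}, #(𝒢 p)) * N ^ 2 :=
        Nat.mul_le_mul_right _ ((card_le_card hcover).trans card_biUnion_le)
    _ ≤ ∑ p ∈ {p ∈ Δ | p.1 ≠ p.2}, (m / 2 + 1) * N ^ (m / 2) * (m / 2) ^ m := by
        rw [sum_mul]
        exact sum_le_sum h𝒢
    _ ≤ #Δ * ((m / 2 + 1) * N ^ (m / 2) * (m / 2) ^ m) := by
        rw [sum_const, smul_eq_mul]
        exact Nat.mul_le_mul_right _ (card_filter_le _ _)

end indexCounting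

lemma abs_card_sub_card_le {α : Type*} [DecidableEq α] (A B : Finset α) :
    |(#A : ℝ) - #B| ≤ #(A \ B) + #(B \ A) := by
  have h₁ : (#A : ℝ) ≤ #(A \ B) + #B := by exact_mod_cast card_le_card_sdiff_add_card
  have h₂ : (#B : ℝ) ≤ #(B \ A) + #A := by exact_mod_cast card_le_card_sdiff_add_card
  rw [abs_sub_le_iff]
  constructor <;> linarith [(#(A \ B)).cast_nonneg (α := ℝ), (#(B \ A)).cast_nonneg (α := ℝ)]

lemma tendsto_div_sqrt_pow_of_norm_le {u : ℕ → ℂ} {v : ℕ → ℝ} {m : ℕ}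
    (hv : Tendsto v atTop (nhds 0)) (h : ∀ᶠ N : ℕ in atTop, ‖u N‖ ≤ v N * √N ^ m) :
    Tendsto (fun N : ℕ => u N / ((√N : ℝ) : ℂ) ^ m) atTop (nhds 0) := by
  refine squeeze_zero_norm' ?_ hv
  filter_upwards [h, eventually_ge_atTop 1] with N hN hN₁
  have hpos : 0 < √(N : ℝ) ^ m := pow_pos (Real.sqrt_pos.mpr (by exact_mod_cast hN₁)) m
  rw [norm_div, norm_pow, Complex.norm_real, Real.norm_of_nonneg (Real.sqrt_nonneg _)]
  exact (div_le_iff₀ hpos).mpr hN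

lemma sqrt_natCast_pow_two_mul (N s : ℕ) : √(N : ℝ) ^ (2 * s) = (N : ℝ) ^ s := by
  rw [pow_mul, Real.sq_sqrt (Nat.cast_nonneg N)]

section limits
variable {𝒜 : Type*} [Ring 𝒜] [Algebra ℂ 𝒜] {φ : 𝒜 →ₗ[ℂ] ℂ} {m : ℕ}

lemma tendsto_sum_badSet_div (hm : 1 ≤ m) (E : (N : ℕ) → Fin N → Fin N → Prop)
    (x : (N : ℕ) → Fin N → 𝒜) {D : ℝ} (hD : 1 ≤ D)
    (hmom : ∀ N i, ∀ n ≤ m, ‖φ (x N i ^ n)‖ ≤ D) :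
    Tendsto (fun N : ℕ => (∑ idx ∈ badSet (E N) m, kerGProd φ (E N) (x N) idx)
      / ((√N : ℝ) : ℂ) ^ m) atTop (nhds 0) := by
  set s := (m - 1) / 2
  set K : ℝ := (s + 1) * s ^ m * D ^ m
  refine tendsto_div_sqrt_pow_of_norm_le (v := fun N => K / √N)
    (tendsto_const_nhds.div_atTop (Real.tendsto_sqrt_atTop.comp tendsto_natCast_atTop_atTop)) ?_
  filter_upwards [eventually_ge_atTop 1] with N hN
  have hsqrt : 0 < √(N : ℝ) := Real.sqrt_pos.mpr (by exact_mod_cast hN)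
  have hcard : (#(badSet (E N) m) : ℝ) ≤ (s + 1) * N ^ s * s ^ m := by
    exact_mod_cast card_badSet_le hN (E N)
  calc ‖∑ idx ∈ badSet (E N) m, kerGProd φ (E N) (x N) idx‖
      ≤ ∑ idx ∈ badSet (E N) m, D ^ m :=
        (norm_sum_le _ _).trans (sum_le_sum fun idx _ => norm_kerGProd_le hD (hmom N) idx)
    _ = #(badSet (E N) m) * D ^ m := by rw [sum_const, nsmul_eq_mul]
    _ ≤ (s + 1) * N ^ s * s ^ m * D ^ m := by gcongr
    _ = K / √N * ((N : ℝ) ^ s * √N) := by simp only [K]; field_simp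
    _ ≤ K / √N * √N ^ m := by
        gcongr
        calc (N : ℝ) ^ s * √N = √N ^ (2 * s + 1) := by
              rw [pow_succ, sqrt_natCast_pow_two_mul]
          _ ≤ √N ^ m := pow_le_pow_right₀ (Real.one_le_sqrt.mpr (Nat.one_le_cast.mpr hN)) (by omega)

lemma tendsto_card_goodSet_sub_div (EG EH : (N : ℕ) → Fin N → Fin N → Prop)
    (Δ : (N : ℕ) → Finset (Fin N × Fin N))
    (hΔ : ∀ N u v, (EG N u v ∧ ¬ EH N u v) ∨ (¬ EG N u v ∧ EH N u v) → (u, v) ∈ Δ N)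
    (hΔlim : Tendsto (fun N : ℕ => (#(Δ N) : ℝ) / (N : ℝ) ^ 2) atTop (nhds 0)) :
    Tendsto (fun N : ℕ => ((#(goodSet (EG N) m) : ℂ) - #(goodSet (EH N) m))
      / ((√N : ℝ) : ℂ) ^ m) atTop (nhds 0) := by
  set s := m / 2
  set K : ℝ := 2 * ((s + 1) * s ^ m)
  refine tendsto_div_sqrt_pow_of_norm_le (v := fun N => K * ((#(Δ N) : ℝ) / (N : ℝ) ^ 2))
    (by simpa using hΔlim.const_mul K) ?_
  filter_upwards [eventually_ge_atTop 1] with N hN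
  set G := goodSet (EG N) m
  set H := goodSet (EH N) m
  have hGH : (#(G \ H) : ℝ) * N ^ 2 ≤ #(Δ N) * ((s + 1) * N ^ s * s ^ m) := by
    exact_mod_cast card_goodSet_sdiff_mul_le hN (Δ N) fun u v h₁ h₂ => hΔ N u v (.inl ⟨h₁, h₂⟩)
  have hHG : (#(H \ G) : ℝ) * N ^ 2 ≤ #(Δ N) * ((s + 1) * N ^ s * s ^ m) := by
    exact_mod_cast card_goodSet_sdiff_mul_le hN (Δ N) fun u v h₁ h₂ => hΔ N u v (.inr ⟨h₂, h₁⟩)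
  rw [show (#G : ℂ) - #H = ((#G - #H : ℝ) : ℂ) by push_cast; rfl, Complex.norm_real,
    Real.norm_eq_abs]
  calc |(#G : ℝ) - #H| ≤ #(G \ H) + #(H \ G) := abs_card_sub_card_le G H
    _ ≤ K * (#(Δ N) / (N : ℝ) ^ 2) * (N : ℝ) ^ s := by
        rw [mul_div_assoc', div_mul_eq_mul_div, le_div_iff₀ (by positivity)]
        linarith
    _ ≤ K * (#(Δ N) / (N : ℝ) ^ 2) * √N ^ m := by
        gcongr
        rw [← sqrt_natCast_pow_two_mul]
        exact pow_le_pow_right₀ (Real.one_le_sqrt.mpr (Nat.one_le_cast.mpr hN)) (by omega)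

end limits

theorem stmt17_general {𝒜 : Type*} [Ring 𝒜] [Algebra ℂ 𝒜] (φ : 𝒜 →ₗ[ℂ] ℂ)
    (a b : (N : ℕ) → Fin N → 𝒜)
    (EG EH : (N : ℕ) → Fin N → Fin N → Prop)
    (hmeana : ∀ N i, φ (a N i) = 0) (hmeanb : ∀ N i, φ (b N i) = 0)
    (hvara : ∀ N i, φ (a N i * a N i) = 1) (hvarb : ∀ N i, φ (b N i * b N i) = 1)
    (hindepa : ∀ N, BMTIndepVars φ (EG N) (a N))
    (hindepb : ∀ N, BMTIndepVars φ (EH N) (b N))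
    (hmom : ∀ n : ℕ, ∃ C : ℝ, ∀ N, ∀ i : Fin N, ‖φ (a N i ^ n)‖ ≤ C ∧ ‖φ (b N i ^ n)‖ ≤ C)
    (hsym : Tendsto (fun N : ℕ =>
        ((Finset.univ.filter fun p : Fin N × Fin N =>
            (EG N p.1 p.2 ∧ ¬ EH N p.1 p.2) ∨ (¬ EG N p.1 p.2 ∧ EH N p.1 p.2)).card : ℝ)
          / (N : ℝ) ^ 2) atTop (nhds 0)) :
    ∀ m : ℕ, 1 ≤ m →
      Tendsto (fun N : ℕ =>
          φ ((∑ i : Fin N, a N i) ^ m) / ((Real.sqrt N : ℝ) : ℂ) ^ m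
            - φ ((∑ i : Fin N, b N i) ^ m) / ((Real.sqrt N : ℝ) : ℂ) ^ m)
        atTop (nhds 0) := by
  intro m hm
  choose C hC using hmom
  set D : ℝ := 1 + ∑ n ∈ range (m + 1), |C n|
  have hD : 1 ≤ D := le_add_of_nonneg_right (sum_nonneg fun n _ => abs_nonneg (C n))
  have hCD : ∀ n ≤ m, C n ≤ D := fun n hn =>
    calc C n ≤ |C n| := le_abs_self _
      _ ≤ ∑ k ∈ range (m + 1), |C k| :=
        single_le_sum (fun k _ => abs_nonneg (C k)) (mem_range.mpr (by omega))
      _ ≤ D := le_add_of_nonneg_left zero_le_one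
  have hgood := tendsto_card_goodSet_sub_div (m := m) EG EH _ (fun N u v h => by simpa using h) hsym
  have hbada := tendsto_sum_badSet_div (φ := φ) hm EG a hD
    fun N i n hn => (hC n N i).1.trans (hCD n hn)
  have hbadb := tendsto_sum_badSet_div (φ := φ) hm EH b hD
    fun N i n hn => (hC n N i).2.trans (hCD n hn)
  simpa using ((hgood.add hbada).sub hbadb).congr fun N => by
    rw [moment_eq_card_goodSet_add_sum_badSet (hindepa N) (hmeana N) (hvara N),
      moment_eq_card_goodSet_add_sum_badSet (hindepb N) (hmeanb N) (hvarb N)]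
    ring

/-- perturbation. If the symmetric difference of the independence graphs has
`o(N²)` edges, the two normalized sums have the same limiting moments. -/
theorem stmt17 {𝒜 : Type*} [Ring 𝒜] [Algebra ℂ 𝒜] (φ : 𝒜 →ₗ[ℂ] ℂ) (hφ : φ 1 = 1)
    (a b : (N : ℕ) → Fin N → 𝒜)
    (EG EH : (N : ℕ) → Fin N → Fin N → Prop)
    (hEG : ∀ N v, ¬ EG N v v) (hEH : ∀ N v, ¬ EH N v v)
    (hmeana : ∀ N i, φ (a N i) = 0) (hmeanb : ∀ N i, φ (b N i) = 0)
    (hvara : ∀ N i, φ (a N i * a N i) = 1) (hvarb : ∀ N i, φ (b N i * b N i) = 1)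
    (hindepa : ∀ N, BMTIndepVars φ (EG N) (a N))
    (hindepb : ∀ N, BMTIndepVars φ (EH N) (b N))
    (hmom : ∀ n : ℕ, ∃ C : ℝ, ∀ N, ∀ i : Fin N, ‖φ (a N i ^ n)‖ ≤ C ∧ ‖φ (b N i ^ n)‖ ≤ C)
    (hsym : Tendsto (fun N : ℕ =>
        ((Finset.univ.filter fun p : Fin N × Fin N =>
            (EG N p.1 p.2 ∧ ¬ EH N p.1 p.2) ∨ (¬ EG N p.1 p.2 ∧ EH N p.1 p.2)).card : ℝ)
          / (N : ℝ) ^ 2) atTop (nhds 0)) :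
    ∀ m : ℕ, 1 ≤ m →
      Tendsto (fun N : ℕ =>
          φ ((∑ i : Fin N, a N i) ^ m) / ((Real.sqrt N : ℝ) : ℂ) ^ m
            - φ ((∑ i : Fin N, b N i) ^ m) / ((Real.sqrt N : ℝ) : ℂ) ^ m)
        atTop (nhds 0) :=
  stmt17_general φ a b EG EH hmeana hmeanb hvara hvarb hindepa hindepb hmom hsym

end
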